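/- For the simple symmetric random walk, k * P(S_1 > 0, ..., S_{k-1} > 0, S_k = j) = j * P(S_k = j) for all integers j > 0 and k >= 1 (Kemperman's formula via time reversal). -/

import Mathlib

open MeasureTheory ProbabilityTheory Finset
open scoped ENNReal

/-!
The law of the first `k` steps is invariant under cyclic rotations, so `k · P(A)` is the expected
number of rotations of the step vector that lie in `A`, the event that the walk stays positive
before time `k` and ends at `j`. By the cycle lemma, a vector of integer steps `≤ 1` with sum
`j > 0` has exactly `j` such rotations (and none if its sum is not `j`), so this expectation is
`j · P(S_k = j)`.
-/

namespace Kemperman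

theorem exists_eq_of_le_add_one {f : ℕ → ℤ} (hf : ∀ n, f (n + 1) ≤ f n + 1) {a b : ℕ}
    (hab : a ≤ b) {v : ℤ} (ha : f a ≤ v) (hb : v ≤ f b) : ∃ s, a ≤ s ∧ s ≤ b ∧ f s = v := by
  induction b, hab using Nat.le_induction with
  | base => exact ⟨a, le_rfl, le_rfl, le_antisymm ha hb⟩
  | succ b hab ih =>
    by_cases hv : v ≤ f b
    · obtain ⟨s, has, hsb, hs⟩ := ih hv
      exact ⟨s, has, hsb.trans b.le_succ, hs⟩
    · exact ⟨b + 1, hab.trans b.le_succ, le_rfl, by linarith [hf b]⟩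

theorem le_of_forall_lt_period_le {s : ℕ → ℤ} {k : ℕ} {J m : ℤ} (hk : 0 < k) (hJ : 0 ≤ J)
    (hper : ∀ n, s (n + k) = s n + J) (hm : ∀ t < k, m ≤ s t) (n : ℕ) : m ≤ s n := by
  induction n using Nat.strong_induction_on with
  | _ n ih =>
    rcases lt_or_ge n k with hn | hn
    · exact hm n hn
    · have := hper (n - k)
      rw [Nat.sub_add_cancel hn] at this
      linarith [ih (n - k) (by omega)]

/-- The cycle lemma for a skip-free sequence with `s (n + k) = s n + J`: `r ↦ s r` maps the
times `r < k` after which `s` stays above `s r` bijectively onto `[min s, min s + J)`, the preimage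
of a level being its last visit before `k`. -/
theorem card_filter_forall_lt_add_eq_toNat {s : ℕ → ℤ} {k : ℕ} {J : ℤ} (hk : 0 < k) (hJ : 0 < J)
    (hs : ∀ n, s (n + 1) ≤ s n + 1) (hper : ∀ n, s (n + k) = s n + J) :
    #{r ∈ range k | ∀ t ∈ Icc (1 : ℕ) k, s r < s (r + t)} = J.toNat := by
  obtain ⟨t₀, ht₀, hmin⟩ := exists_min_image (range k) s (nonempty_range_iff.2 hk.ne')
  have hglob : ∀ n, s t₀ ≤ s n :=
    le_of_forall_lt_period_le hk hJ.le hper fun t ht => hmin t (mem_range.2 ht)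
  rw [mem_range] at ht₀
  have hlt : ∀ u, s u < s t₀ + J → u < k := fun u hu => by
    by_contra h
    have := hper (u - k)
    rw [Nat.sub_add_cancel (not_lt.1 h)] at this
    linarith [hglob (u - k)]
  have hcard : #(Ico (s t₀) (s t₀ + J)) = J.toNat := by simp
  rw [← hcard]
  refine card_bij (fun r _ => s r) ?_ ?_ ?_
  · intro r hr
    obtain ⟨hrk, hgood⟩ := mem_filter.1 hr
    simp only [mem_Icc] at hgood
    rw [mem_range] at hrk
    refine mem_Ico.2 ⟨hglob r, ?_⟩
    rcases le_or_gt t₀ r with h | h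
    · have := hgood (t₀ + k - r) ⟨by omega, by omega⟩
      rwa [show r + (t₀ + k - r) = t₀ + k by omega, hper] at this
    · have := hgood (t₀ - r) ⟨by omega, by omega⟩
      rw [show r + (t₀ - r) = t₀ by omega] at this
      linarith [hglob r]
  · intro r hr r' hr' he
    rw [mem_filter, mem_range] at hr hr'
    by_contra hne
    rcases lt_or_gt_of_ne hne with h | h
    · have := hr.2 (r' - r) (mem_Icc.2 ⟨by omega, by omega⟩)
      rw [show r + (r' - r) = r' by omega] at this
      omega
    · have := hr'.2 (r - r') (mem_Icc.2 ⟨by omega, by omega⟩)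
      rw [show r' + (r - r') = r by omega] at this
      omega
  · intro v hv
    rw [mem_Ico] at hv
    obtain ⟨u, -, -, hu⟩ := exists_eq_of_le_add_one hs (Nat.le_add_right t₀ k) hv.1
      (by rw [hper]; omega)
    set visits := {u ∈ range k | s u = v}
    have hne : visits.Nonempty := ⟨u, mem_filter.2 ⟨mem_range.2 (hlt u (by omega)), hu⟩⟩
    obtain ⟨hrk, hrv⟩ := mem_filter.1 (visits.max'_mem hne)
    refine ⟨visits.max' hne, mem_filter.2 ⟨hrk, fun t ht => ?_⟩, hrv⟩
    by_contra hle
    rw [mem_Icc] at ht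
    obtain ⟨w, hw, hwk, hwv⟩ := exists_eq_of_le_add_one (v := v) hs
      (show visits.max' hne + t ≤ visits.max' hne + k by omega) (by omega)
      (by rw [hper]; omega)
    have := visits.le_max' w (mem_filter.2 ⟨mem_range.2 (hlt w (by omega)), hwv⟩)
    omega

section CyclicWalk

open Fin.NatCast

variable {k : ℕ} [NeZero k]

def rotate {α : Type*} (r : Fin k) (x : Fin k → α) : Fin k → α := fun i => x (i + r)

@[simp]
theorem rotate_zero {α : Type*} (x : Fin k → α) : rotate 0 x = x :=
  funext fun i => congrArg x (add_zero i)

variable {M : Type*} [AddCommMonoid M]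

/-- The walk with `k`-periodic steps `x (i mod k)`; the cast `ℕ → Fin k` reduces modulo `k`. -/
def cyclicWalk (x : Fin k → M) (t : ℕ) : M := ∑ i ∈ range t, x (i : Fin k)

theorem cyclicWalk_add (x : Fin k → M) (m n : ℕ) :
    cyclicWalk x (m + n) = cyclicWalk x m + cyclicWalk (rotate (m : Fin k) x) n := by
  simp only [cyclicWalk, rotate, sum_range_add, Nat.cast_add, add_comm (m : Fin k)]

theorem cyclicWalk_add_period (x : Fin k → M) (n : ℕ) :
    cyclicWalk x (n + k) = cyclicWalk x n + cyclicWalk x k := by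
  rw [add_comm n, cyclicWalk_add, Fin.natCast_self, rotate_zero, add_comm]

theorem cyclicWalk_comp {N : Type*} [AddCommMonoid N] (f : M →+ N) (x : Fin k → M) (t : ℕ) :
    cyclicWalk (f ∘ x) t = f (cyclicWalk x t) :=
  (map_sum f _ _).symm

theorem cyclicWalk_rotate {G : Type*} [AddCommGroup G] (x : Fin k → G) (r : Fin k) (t : ℕ) :
    cyclicWalk (rotate r x) t = cyclicWalk x (r + t) - cyclicWalk x r := by
  rw [cyclicWalk_add, Fin.cast_val_eq_self, add_sub_cancel_left]

theorem cyclicWalk_rotate_period {G : Type*} [AddCommGroup G] (x : Fin k → G) (r : Fin k) :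
    cyclicWalk (rotate r x) k = cyclicWalk x k := by
  rw [cyclicWalk_rotate, cyclicWalk_add_period, add_sub_cancel_left]

theorem cyclicWalk_eq_sum (y : ℕ → M) {t : ℕ} (ht : t ≤ k) :
    cyclicWalk (fun i : Fin k => y i) t = ∑ i ∈ range t, y i :=
  sum_congr rfl fun i hi => by
    dsimp only
    rw [Fin.val_natCast, Nat.mod_eq_of_lt ((mem_range.1 hi).trans_le ht)]

theorem card_filter_rotate_cyclicWalk_pos (z : Fin k → ℤ) (hz : ∀ i, z i ≤ 1)
    (hpos : 0 < cyclicWalk z k) :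
    #{r | ∀ t ∈ Ico (1 : ℕ) k, 0 < cyclicWalk (rotate r z) t} = (cyclicWalk z k).toNat := by
  have hstep : ∀ n, cyclicWalk z (n + 1) ≤ cyclicWalk z n + 1 := fun n => by
    simp only [cyclicWalk, sum_range_succ]
    linarith [hz n]
  rw [← card_filter_forall_lt_add_eq_toNat (NeZero.pos k) hpos hstep (cyclicWalk_add_period z)]
  have hgood : ∀ r : Fin k, (∀ t ∈ Ico (1 : ℕ) k, 0 < cyclicWalk (rotate r z) t) ↔
      ∀ t ∈ Icc (1 : ℕ) k, cyclicWalk z r < cyclicWalk z (r + t) := fun r => by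
    simp only [cyclicWalk_rotate, sub_pos, mem_Ico, mem_Icc]
    refine ⟨fun h t ht => ?_, fun h t ht => h t ⟨ht.1, ht.2.le⟩⟩
    rcases ht.2.lt_or_eq with hlt | rfl
    · exact h t ⟨ht.1, hlt⟩
    · rw [cyclicWalk_add_period]
      exact lt_add_of_pos_right _ hpos
  simp only [hgood, card_filter]
  exact Fin.sum_univ_eq_sum_range
    (fun n => if ∀ t ∈ Icc (1 : ℕ) k, cyclicWalk z n < cyclicWalk z (n + t) then 1 else 0) k

end CyclicWalk

theorem ae_pi_forall {ι α : Type*} [Fintype ι] [MeasurableSpace α] {ν : Measure α}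
    [SigmaFinite ν] {p : α → Prop} (hp : ∀ᵐ y ∂ν, p y) :
    ∀ᵐ x ∂(Measure.pi fun _ : ι => ν), ∀ i, p (x i) :=
  ae_all_iff.2 fun _ => Measure.tendsto_eval_ae_ae.eventually hp

theorem measurePreserving_rotate {k : ℕ} [NeZero k] {α : Type*} [MeasurableSpace α]
    (ν : Measure α) [SigmaFinite ν] (r : Fin k) :
    MeasurePreserving (rotate r) (Measure.pi fun _ : Fin k => ν) (Measure.pi fun _ => ν) :=
  measurePreserving_arrowCongr' (fun _ => ν) (fun _ => ν) (Equiv.addRight r).symm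
    (MeasurableEquiv.refl α) fun _ => MeasurePreserving.id ν

section Events

def staysPositiveEndsAt (k j : ℕ) [NeZero k] : Set (Fin k → ℝ) :=
  {x | (∀ t, 1 ≤ t → t < k → 0 < cyclicWalk x t) ∧ cyclicWalk x k = j}

def endsAt (k j : ℕ) [NeZero k] : Set (Fin k → ℝ) := {x | cyclicWalk x k = j}

variable {k : ℕ} [NeZero k]

theorem measurable_cyclicWalk (t : ℕ) : Measurable fun x : Fin k → ℝ => cyclicWalk x t :=
  Finset.measurable_sum _ fun _ _ => measurable_pi_apply _

theorem measurableSet_endsAt (j : ℕ) : MeasurableSet (endsAt k j) :=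
  measurable_cyclicWalk k (measurableSet_singleton _)

theorem measurableSet_staysPositiveEndsAt (j : ℕ) : MeasurableSet (staysPositiveEndsAt k j) := by
  simp only [staysPositiveEndsAt, Set.ofPred_and, Set.ofPred_forall]
  exact .inter (.iInter fun t => .iInter fun _ => .iInter fun _ =>
    measurableSet_lt measurable_const (measurable_cyclicWalk t)) (measurableSet_endsAt j)

theorem sum_indicator_rotate_staysPositiveEndsAt {j : ℕ} (hj : 0 < j) (z : Fin k → ℤ)
    (hz : ∀ i, z i ≤ 1) :
    ∑ r, (rotate r ⁻¹' staysPositiveEndsAt k j).indicator 1 (Int.cast ∘ z : Fin k → ℝ)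
      = (j : ℝ≥0∞) * (endsAt k j).indicator 1 (Int.cast ∘ z : Fin k → ℝ) := by
  classical
  have hcast : ∀ (y : Fin k → ℤ) t, cyclicWalk (Int.cast ∘ y : Fin k → ℝ) t = cyclicWalk y t :=
    cyclicWalk_comp (Int.castAddHom ℝ)
  have hrot : ∀ r, rotate r (Int.cast ∘ z : Fin k → ℝ) = Int.cast ∘ rotate r z := fun _ => rfl
  simp only [Set.indicator_apply, Set.mem_preimage, Pi.one_apply, mul_ite, mul_one, mul_zero,
    sum_boole]
  by_cases hend : cyclicWalk z k = j
  · have hmem : ∀ r, rotate r (Int.cast ∘ z : Fin k → ℝ) ∈ staysPositiveEndsAt k j ↔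
        ∀ t ∈ Ico (1 : ℕ) k, 0 < cyclicWalk (rotate r z) t := fun r => by
      simp only [staysPositiveEndsAt, Set.mem_ofPred_eq, hrot, hcast, cyclicWalk_rotate_period,
        hend, Int.cast_pos, Int.cast_natCast, and_true, mem_Ico, and_imp]
    simp only [hmem, card_filter_rotate_cyclicWalk_pos z hz (hend ▸ Int.natCast_pos.2 hj), hend]
    simp [endsAt, hcast, hend]
  · have hnot : ∀ r, rotate r (Int.cast ∘ z : Fin k → ℝ) ∉ staysPositiveEndsAt k j :=
      fun r h => by
        simp only [staysPositiveEndsAt, Set.mem_ofPred_eq, hrot, hcast,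
          cyclicWalk_rotate_period] at h
        exact hend (by exact_mod_cast h.2)
    have hend' : ((cyclicWalk z k : ℤ) : ℝ) ≠ j := by exact_mod_cast hend
    simp [hnot, endsAt, hcast, hend']

theorem natCast_mul_measure_staysPositiveEndsAt {μ : Measure (Fin k → ℝ)}
    (hrot : ∀ r, MeasurePreserving (rotate r) μ μ)
    (hint : ∀ᵐ x ∂μ, ∃ z : Fin k → ℤ, (∀ i, z i ≤ 1) ∧ Int.cast ∘ z = x) {j : ℕ} (hj : 0 < j) :
    k * μ (staysPositiveEndsAt k j) = j * μ (endsAt k j) := by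
  have hA := measurableSet_staysPositiveEndsAt (k := k) j
  have hB := measurableSet_endsAt (k := k) j
  calc (k : ℝ≥0∞) * μ (staysPositiveEndsAt k j)
      = ∑ r : Fin k, μ (rotate r ⁻¹' staysPositiveEndsAt k j) := by
        simp [(hrot _).measure_preimage hA.nullMeasurableSet]
    _ = ∫⁻ x, ∑ r : Fin k, (rotate r ⁻¹' staysPositiveEndsAt k j).indicator 1 x ∂μ := by
        rw [lintegral_finsetSum _ fun r _ => measurable_one.indicator ((hrot r).measurable hA)]
        simp [lintegral_indicator_one ((hrot _).measurable hA)]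
    _ = ∫⁻ x, j * (endsAt k j).indicator 1 x ∂μ := lintegral_congr_ae <| hint.mono
        fun _ ⟨z, hz, hx⟩ => hx ▸ sum_indicator_rotate_staysPositiveEndsAt hj z hz
    _ = j * μ (endsAt k j) := by
        rw [lintegral_const_mul _ (measurable_one.indicator hB), lintegral_indicator_one hB]

end Events

theorem kemperman_formula_of_skipFree {Ω : Type*} [MeasurableSpace Ω]
    {P : Measure Ω} [IsProbabilityMeasure P] {X : ℕ → Ω → ℝ} (hindep : iIndepFun X P)
    (hmeas : ∀ i, Measurable (X i)) {ν : Measure ℝ} (hlaw : ∀ i, P.map (X i) = ν)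
    (hν : ∀ᵐ y ∂ν, ∃ n : ℤ, n ≤ 1 ∧ (n : ℝ) = y) {k j : ℕ} (hk : 0 < k) (hj : 0 < j) :
    k * P {ω | (∀ t, 1 ≤ t → t < k → 0 < ∑ i ∈ range t, X i ω) ∧ ∑ i ∈ range k, X i ω = j}
      = j * P {ω | ∑ i ∈ range k, X i ω = j} := by
  have : NeZero k := ⟨hk.ne'⟩
  have : IsProbabilityMeasure ν :=
    hlaw 0 ▸ Measure.isProbabilityMeasure_map (hmeas 0).aemeasurable
  set V : Ω → Fin k → ℝ := fun ω i => X i ω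
  have hV : Measurable V := measurable_pi_lambda _ fun i => hmeas i
  have hlawV : P.map V = Measure.pi fun _ => ν := by
    rw [(hindep.precomp Fin.val_injective).map_fun_eq_pi_map
      fun i : Fin k => (hmeas i).aemeasurable]
    simp only [hlaw]
  have hwalk : ∀ ω {t}, t ≤ k → cyclicWalk (V ω) t = ∑ i ∈ range t, X i ω :=
    fun ω _ ht => cyclicWalk_eq_sum (fun i => X i ω) ht
  have hE : {ω | (∀ t, 1 ≤ t → t < k → 0 < ∑ i ∈ range t, X i ω) ∧ ∑ i ∈ range k, X i ω = j}
      = V ⁻¹' staysPositiveEndsAt k j := by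
    ext ω
    simp only [staysPositiveEndsAt, Set.mem_ofPred_eq, Set.mem_preimage, hwalk ω le_rfl]
    exact and_congr_left' <| forall_congr' fun t => forall_congr' fun _ =>
      forall_congr' fun ht => by rw [hwalk ω ht.le]
  have hF : {ω | ∑ i ∈ range k, X i ω = j} = V ⁻¹' endsAt k j := by
    ext ω
    simp only [endsAt, Set.mem_ofPred_eq, Set.mem_preimage, hwalk ω le_rfl]
  rw [hE, hF, ← Measure.map_apply hV (measurableSet_staysPositiveEndsAt j),
    ← Measure.map_apply hV (measurableSet_endsAt j), hlawV]
  exact natCast_mul_measure_staysPositiveEndsAt (measurePreserving_rotate ν)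
    ((ae_pi_forall hν).mono fun x hx => ⟨fun i => (hx i).choose, fun i => (hx i).choose_spec.1,
      funext fun i => (hx i).choose_spec.2⟩) hj

end Kemperman

open Kemperman

theorem kemperman_formula
    {Ω : Type*} [MeasurableSpace Ω] (P : Measure Ω) [IsProbabilityMeasure P]
    (X : ℕ → Ω → ℝ)
    (hindep : iIndepFun X P)
    (hmeas : ∀ i, Measurable (X i))
    (hdist : ∀ i, Measure.map (X i) P
      = (1 / 2 : ENNReal) • Measure.dirac (1 : ℝ)
          + (1 / 2 : ENNReal) • Measure.dirac (-1 : ℝ))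
    (S : ℕ → Ω → ℝ) (hS : ∀ m ω, S m ω = ∑ i ∈ Finset.range m, X i ω)
    (k j : ℕ) (hk : 1 ≤ k) (hj : 0 < j) :
    (k : ENNReal) * P {ω | (∀ i, 1 ≤ i → i < k → 0 < S i ω) ∧ S k ω = (j : ℝ)}
      = (j : ENNReal) * P {ω | S k ω = (j : ℝ)} := by
  have hsteps : ∀ᵐ y ∂((1 / 2 : ENNReal) • Measure.dirac (1 : ℝ)
      + (1 / 2 : ENNReal) • Measure.dirac (-1 : ℝ)), ∃ n : ℤ, n ≤ 1 ∧ (n : ℝ) = y := by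
    refine ae_add_measure_iff.2 ⟨Measure.ae_smul_measure ?_ _, Measure.ae_smul_measure ?_ _⟩ <;>
      rw [ae_dirac_eq, Filter.eventually_pure]
    exacts [⟨1, le_rfl, Int.cast_one⟩, ⟨-1, by norm_num, by push_cast; rfl⟩]
  simp only [hS]
  exact kemperman_formula_of_skipFree hindep hmeas hdist hsteps hk hj
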